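/- arXiv:math/0501405 — 3 statements merged into one kernel-verified Lean document; each statement's English description precedes it below -/
import Mathlib

section
/- The operators π_λ(K)=T_{iw₁}, π_λ(E)=(q^{1/2}/(q−q^{−1})) S_{iw₂}(q^{−1/2}e^{πλ/w₂} + q^{1/2}e^{−πλ/w₂} T_{iw₁}), π_λ(F)=−(q^{1/2}/(q−q^{−1})) S_{−iw₂}(q^{−1/2}e^{πλ/w₂} + q^{1/2}e^{−πλ/w₂} T_{−iw₁}) on meromorphic (or formal) functions of z, where T_y f(z)=f(z+y) and S_y f(z)=e^{2πiz/y}f(z), satisfy the defining relations of U_q(sl₂): π_λ(K)π_λ(E)=q²π_λ(E)π_λ(K), π_λ(K)π_λ(F)=q^{−2}π_λ(F)π_λ(K), and π_λ(E)π_λ(F)−π_λ(F)π_λ(E)=(π_λ(K)−π_λ(K)^{−1})/(q−q^{−1}). -/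
open Complex Real

/-- Translation operator T_y f(z) = f(z+y). -/
def Tshift (y : ℂ) (f : ℂ → ℂ) : ℂ → ℂ := fun z => f (z + y)

/-- Multiplication operator S_y f(z) = e^{2πiz/y} f(z). -/
noncomputable def Smult (y : ℂ) (f : ℂ → ℂ) : ℂ → ℂ :=
  fun z => Complex.exp (2 * π * I * z / y) * f z

/-- The principal series operators satisfy the defining relations of U_q(sl₂). -/
theorem principal_series_relations
    (w1 w2 : ℝ) (hw1 : 0 < w1) (hw2 : 0 < w2) (lam : ℂ)
    (sq : ℂ) (hsq : sq = Complex.exp (π * I * w1 / (2 * w2)))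
    (q : ℂ) (hq : q = sq ^ 2) (hq2 : q ^ 2 ≠ 1)
    (piK piE piF : (ℂ → ℂ) → (ℂ → ℂ))
    (hK : piK = Tshift (I * w1))
    (hE : piE = fun f => (sq / (q - q⁻¹)) •
      Smult (I * w2) (fun z => sq⁻¹ * Complex.exp (π * lam / w2) * f z +
        sq * Complex.exp (-(π * lam) / w2) * Tshift (I * w1) f z))
    (hF : piF = fun f => (-(sq / (q - q⁻¹))) •
      Smult (-(I * w2)) (fun z => sq⁻¹ * Complex.exp (π * lam / w2) * f z +
        sq * Complex.exp (-(π * lam) / w2) * Tshift (-(I * w1)) f z)) :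
    (∀ f : ℂ → ℂ, piK (piE f) = q ^ 2 • piE (piK f)) ∧
    (∀ f : ℂ → ℂ, piK (piF f) = (q ^ 2)⁻¹ • piF (piK f)) ∧
    (∀ f : ℂ → ℂ, ∀ z : ℂ,
      piE (piF f) z - piF (piE f) z =
        (Tshift (I * w1) f z - Tshift (-(I * w1)) f z) / (q - q⁻¹)) := by
  have hw2' : (w2 : ℂ) ≠ 0 := by exact_mod_cast hw2.ne'
  have hq2exp : q ^ 2 = Complex.exp (2 * π * I * w1 / w2) := by
    have h4 : ((4:ℕ):ℂ) * (π * I * w1 / (2 * w2)) = 2 * π * I * w1 / w2 := by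
      push_cast; field_simp; ring
    rw [hq, hsq, ← pow_mul]
    norm_num
    rw [← Complex.exp_nat_mul, h4]
  have hI : (Complex.I : ℂ) ≠ 0 := Complex.I_ne_zero
  have hqinv : (q ^ 2)⁻¹ = Complex.exp (-(2 * π * I * w1 / w2)) := by
    rw [hq2exp, ← Complex.exp_neg]
  have hP : ∀ z : ℂ, Complex.exp (2*π*I*(z + I*w1)/(I*w2))
      = q^2 * Complex.exp (2*π*I*z/(I*w2)) := by
    intro z
    rw [hq2exp, ← Complex.exp_add]
    congr 1
    field_simp
    ring
  have hM : ∀ z : ℂ, Complex.exp (2*π*I*(z + I*w1)/(-(I*w2)))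
      = (q^2)⁻¹ * Complex.exp (2*π*I*z/(-(I*w2))) := by
    intro z
    rw [hqinv, ← Complex.exp_add]
    congr 1
    field_simp
    ring
  have hPneg : ∀ z : ℂ, Complex.exp (2*π*I*(z + -(I*w1))/(I*w2))
      = (q^2)⁻¹ * Complex.exp (2*π*I*z/(I*w2)) := by
    intro z
    rw [hqinv, ← Complex.exp_add]
    congr 1
    field_simp
    ring
  have hMneg : ∀ z : ℂ, Complex.exp (2*π*I*(z + -(I*w1))/(-(I*w2)))
      = q^2 * Complex.exp (2*π*I*z/(-(I*w2))) := by
    intro z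
    rw [hq2exp, ← Complex.exp_add]
    congr 1
    field_simp
    ring
  have hsq0 : sq ≠ 0 := by rw [hsq]; exact Complex.exp_ne_zero _
  have hq0 : q ≠ 0 := by rw [hq]; exact pow_ne_zero _ hsq0
  have hden : q - q⁻¹ ≠ 0 := by
    intro h
    apply hq2
    have h1 : q = q⁻¹ := sub_eq_zero.mp h
    have : q * q = q * q⁻¹ := by rw [← h1]
    rw [mul_inv_cancel₀ hq0] at this
    rw [pow_two, this]
  subst hK hE hF
  refine ⟨?_, ?_, ?_⟩
  · intro f
    funext z
    simp only [Tshift, Smult, Pi.smul_apply, smul_eq_mul]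
    rw [hP z]
    ring
  · intro f
    funext z
    simp only [Tshift, Smult, Pi.smul_apply, smul_eq_mul]
    rw [hM z]
    ring
  · intro f z
    simp only [Tshift, Smult, Pi.smul_apply, smul_eq_mul]
    rw [hM z, hPneg z]
    have hMP : Complex.exp (2*π*I*z/(-(I*w2))) = (Complex.exp (2*π*I*z/(I*w2)))⁻¹ := by
      rw [← Complex.exp_neg]
      congr 1
      field_simp
    have hee : Complex.exp (-(π * lam) / w2) = (Complex.exp (π * lam / w2))⁻¹ := by
      rw [← Complex.exp_neg]
      congr 1
      ring
    have ez1 : z + I*(w1:ℂ) + -(I*(w1:ℂ)) = z := by ring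
    have ez2 : z + -(I*(w1:ℂ)) + I*(w1:ℂ) = z := by ring
    rw [hMP, hee, ez1, ez2]
    subst hq
    set P := Complex.exp (2*π*I*z/(I*(w2:ℂ))) with hPdef
    set e := Complex.exp (π * lam / (w2:ℂ)) with hedef
    have hP0 : P ≠ 0 := Complex.exp_ne_zero _
    have he0 : e ≠ 0 := Complex.exp_ne_zero _
    generalize f z = F0
    generalize f (z + I*(w1:ℂ)) = Fp
    generalize f (z + -(I*(w1:ℂ))) = Fm
    have hPP : P * P⁻¹ = 1 := mul_inv_cancel₀ hP0
    have hEE : e * e⁻¹ = 1 := mul_inv_cancel₀ he0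
    have hSS : sq * sq⁻¹ = 1 := mul_inv_cancel₀ hsq0
    have hDD : (sq ^ 2 - (sq ^ 2)⁻¹) * (sq ^ 2 - (sq ^ 2)⁻¹)⁻¹ = 1 := mul_inv_cancel₀ hden
    linear_combination
      (Fp - Fm) * (sq ^ 2 * ((sq ^ 2 - (sq ^ 2)⁻¹)⁻¹) ^ 2 * (1 - (sq⁻¹) ^ 4) * e * e⁻¹) * hPP +
      (Fp - Fm) * (sq ^ 2 * ((sq ^ 2 - (sq ^ 2)⁻¹)⁻¹) ^ 2 * (1 - (sq⁻¹) ^ 4)) * hEE +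
      (Fp - Fm) * (-(((sq ^ 2 - (sq ^ 2)⁻¹)⁻¹) ^ 2 * (sq⁻¹) ^ 2 * (sq * sq⁻¹ + 1))
        + sq ^ 2 * ((sq ^ 2 - (sq ^ 2)⁻¹)⁻¹) ^ 2 * P * P⁻¹ * e * e⁻¹ * (1 - (sq⁻¹) ^ 4)) * hSS +
      (Fp - Fm) * ((sq ^ 2 - (sq ^ 2)⁻¹)⁻¹) * hDD
end

section
/- Under the principal series representation π_λ of U_q(sl₂) on functions of z (with π_λ(K), π_λ(E), π_λ(F) given by the explicit difference-multiplication operators), the quantum Casimir Ω = qK + q^{−1}K^{−1} + (q−q^{−1})² FE acts as the scalar −2cosh(2πλ/w₂); that is, π_λ(Ω) f = −2cosh(2πλ/w₂) f for every function f. -/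
open Complex Real

/-!
With `e z = exp (2πz/w₂)` one has `e (z - i w₁) = q⁻² e z`, so in `FE` the exponential prefactors of
`F` and `E` cancel up to a power of `q`. The composite `(q - q⁻¹)² FE` then equals
`-(qK + q⁻¹K⁻¹) - (a² + a⁻²)` with `a = exp (πλ/w₂)`, and `a² + a⁻² = 2 cosh (2πλ/w₂)`.
-/

section
variable {K : Type*} [Field K]

theorem sub_inv_ne_zero_of_sq_ne_one {q : K} (hq : q ≠ 0) (hq2 : q ^ 2 ≠ 1) : q - q⁻¹ ≠ 0 := by
  have : q - q⁻¹ = (q ^ 2 - 1) / q := by field_simp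
  rw [this]
  exact div_ne_zero (sub_ne_zero.2 hq2) hq

theorem casimir_apply_eq_smul_of_shift (s q a b h : K) (e e' : K → K)
    (piK piKinv piE piF : (K → K) → (K → K))
    (hs : s ≠ 0) (hq : q = s ^ 2) (hq2 : q ^ 2 ≠ 1) (hab : a * b = 1)
    (he : ∀ z, e z * e' z = 1) (hshift : ∀ z, e (z - h) * q ^ 2 = e z)
    (hK : ∀ f z, piK f z = f (z + h))
    (hKinv : ∀ f z, piKinv f z = f (z - h))
    (hE : ∀ f z, piE f z = (s / (q - q⁻¹)) * e z * (s⁻¹ * a * f z + s * b * f (z + h)))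
    (hF : ∀ f z, piF f z = -(s / (q - q⁻¹)) * e' z * (s⁻¹ * a * f z + s * b * f (z - h)))
    (f : K → K) (z : K) :
    q * piK f z + q⁻¹ * piKinv f z + (q - q⁻¹) ^ 2 * piF (piE f) z = -(a ^ 2 + b ^ 2) * f z := by
  have hq0 : q ≠ 0 := hq ▸ pow_ne_zero 2 hs
  have hD := sub_inv_ne_zero_of_sq_ne_one hq0 hq2
  rw [hK, hKinv, hF, hE, hE, sub_add_cancel]
  field_simp
  linear_combination
    (-q ^ 2 * f (z + h) * a * b - f (z - h) * a * b - q * a ^ 2 * f z - q * f z * b ^ 2) * he z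
    + (-q ^ 2 * f (z + h) - f (z - h)) * hab
    + (-f (z - h) * e' z * a * b - q * e' z * f z * b ^ 2) * hshift z
    + (q * e' z * a * b * (f (z + h) * e z + f (z - h) * e (z - h))
      + q * e' z * f z * b ^ 2 * e (z - h) * (s ^ 2 + q)) * hq

end

theorem exp_mul_exp_neg_div (x y : ℂ) : Complex.exp (x / y) * Complex.exp (-x / y) = 1 := by
  rw [← Complex.exp_add, neg_div, add_neg_cancel, Complex.exp_zero]

theorem casimir_acts_as_scalar_general
    (w1 w2 : ℝ) (lam : ℂ)
    (sq : ℂ) (hsq : sq = Complex.exp (π * I * w1 / (2 * w2)))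
    (q : ℂ) (hq : q = sq ^ 2) (hq2 : q ^ 2 ≠ 1)
    (piK piKinv piE piF : (ℂ → ℂ) → (ℂ → ℂ))
    (hK : ∀ f z, piK f z = f (z + I * w1))
    (hKinv : ∀ f z, piKinv f z = f (z - I * w1))
    (hE : ∀ f z, piE f z = (sq / (q - q⁻¹)) * Complex.exp (2 * π * z / w2) *
      (sq⁻¹ * Complex.exp (π * lam / w2) * f z +
       sq * Complex.exp (-(π * lam) / w2) * f (z + I * w1)))
    (hF : ∀ f z, piF f z = -(sq / (q - q⁻¹)) * Complex.exp (-(2 * π * z) / w2) *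
      (sq⁻¹ * Complex.exp (π * lam / w2) * f z +
       sq * Complex.exp (-(π * lam) / w2) * f (z - I * w1))) :
    ∀ f : ℂ → ℂ, ∀ z : ℂ,
      q * piK f z + q⁻¹ * piKinv f z + (q - q⁻¹) ^ 2 * piF (piE f) z =
        -2 * Complex.cosh (2 * π * lam / w2) * f z := by
  intro f z
  have hshift : ∀ z : ℂ, Complex.exp (2 * π * (z - I * w1) / w2) * q ^ 2 =
      Complex.exp (2 * π * z / w2) := by
    intro z
    rw [hq, hsq, ← pow_mul, ← Complex.exp_nat_mul, ← Complex.exp_add]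
    congr 1
    push_cast
    ring
  have hcosh : -2 * Complex.cosh (2 * π * lam / w2) =
      -(Complex.exp (π * lam / w2) ^ 2 + Complex.exp (-(π * lam) / w2) ^ 2) := by
    rw [neg_mul, two_cosh, ← Complex.exp_nat_mul, ← Complex.exp_nat_mul]
    congr 3 <;> push_cast <;> ring
  rw [hcosh, casimir_apply_eq_smul_of_shift sq q _ _ (I * w1) (fun z ↦ Complex.exp (2 * π * z / w2))
    (fun z ↦ Complex.exp (-(2 * π * z) / w2)) piK piKinv piE piF (hsq ▸ Complex.exp_ne_zero _) hq hq2
    (exp_mul_exp_neg_div _ _) (fun z ↦ exp_mul_exp_neg_div _ _) hshift hK hKinv hE hF]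

/-- Under the principal series representation the quantum Casimir
Ω = qK + q⁻¹K⁻¹ + (q−q⁻¹)²FE acts as the scalar −2cosh(2πλ/w₂). -/
theorem casimir_acts_as_scalar
    (w1 w2 : ℝ) (hw1 : 0 < w1) (hw2 : 0 < w2) (lam : ℂ)
    (sq : ℂ) (hsq : sq = Complex.exp (π * I * w1 / (2 * w2)))
    (q : ℂ) (hq : q = sq ^ 2) (hq2 : q ^ 2 ≠ 1)
    (piK piKinv piE piF : (ℂ → ℂ) → (ℂ → ℂ))
    (hK : ∀ f z, piK f z = f (z + I * w1))
    (hKinv : ∀ f z, piKinv f z = f (z - I * w1))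
    (hE : ∀ f z, piE f z = (sq / (q - q⁻¹)) * Complex.exp (2 * π * z / w2) *
      (sq⁻¹ * Complex.exp (π * lam / w2) * f z +
       sq * Complex.exp (-(π * lam) / w2) * f (z + I * w1)))
    (hF : ∀ f z, piF f z = -(sq / (q - q⁻¹)) * Complex.exp (-(2 * π * z) / w2) *
      (sq⁻¹ * Complex.exp (π * lam / w2) * f z +
       sq * Complex.exp (-(π * lam) / w2) * f (z - I * w1))) :
    ∀ f : ℂ → ℂ, ∀ z : ℂ,
      q * piK f z + q⁻¹ * piKinv f z + (q - q⁻¹) ^ 2 * piF (piE f) z =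
        -2 * Complex.cosh (2 * π * lam / w2) * f z :=
  casimir_acts_as_scalar_general w1 w2 lam sq hsq q hq hq2 piK piKinv piE piF hK hKinv hE hF
end

section
/- For every q ∈ ℂ, z ∈ ℂ, w₂ > 0, and every nonnegative integer k, if a function G satisfies G(ζ+iw₁/2)=2cosh(πζ/w₂)G(ζ−iw₁/2) for all ζ (with q=e^{πiw₁/w₂}), then G(z)/G(z−ikw₁) = e^{kπz/w₂} q^{−k²/2} ∏_{j=0}^{k−1}(1 − (−e^{−2πz/w₂}q)·q^{2j}), i.e. G(z)/G(z−ikw₁) = e^{kπz/w₂} q^{−k²/2} (−e^{−2πz/w₂}q; q²)_k, wherever G is nonzero at the relevant points. -/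
open Complex Real

/-- Iterating the hyperbolic gamma difference equation k times yields a
q-Pochhammer factor:
G(z)/G(z−ikw₁) = e^{kπz/w₂} q^{−k²/2} (−e^{−2πz/w₂}q; q²)_k. -/
theorem hypGamma_iterated_difference
    (w1 w2 : ℝ) (hw1 : 0 < w1) (hw2 : 0 < w2)
    (sq : ℂ) (hsq : sq = Complex.exp (π * I * w1 / (2 * w2)))
    (q : ℂ) (hq : q = sq ^ 2)
    (G : ℂ → ℂ)
    (hG : ∀ ζ : ℂ, G (ζ + I * w1 / 2) = 2 * Complex.cosh (π * ζ / w2) * G (ζ - I * w1 / 2))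
    (z : ℂ) (k : ℕ)
    (hne : ∀ j : ℕ, j ≤ k → G (z - (j : ℂ) * I * w1) ≠ 0) :
    G z / G (z - (k : ℂ) * I * w1) =
      Complex.exp ((k : ℂ) * π * z / w2) * sq ^ (-(k ^ 2 : ℤ)) *
        ∏ j ∈ Finset.range k, (1 - (-Complex.exp (-(2 * π * z) / w2) * q) * q ^ (2 * j)) := by
  have hsq0 : sq ≠ 0 := by rw [hsq]; exact Complex.exp_ne_zero _
  -- single step of the difference equation, rewritten multiplicatively
  have key : ∀ j : ℕ, G (z - (j : ℂ) * I * w1) =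
      (Complex.exp (π * z / w2) * sq ^ (-(2 * (j : ℤ) + 1)) *
        (1 - (-Complex.exp (-(2 * π * z) / w2) * q) * q ^ (2 * j))) *
      G (z - ((j : ℂ) + 1) * I * w1) := by
    intro j
    have h := hG (z - (j : ℂ) * I * w1 - I * w1 / 2)
    have e1 : z - (j : ℂ) * I * w1 - I * w1 / 2 + I * w1 / 2 = z - (j : ℂ) * I * w1 := by ring
    have e2 : z - (j : ℂ) * I * w1 - I * w1 / 2 - I * w1 / 2 = z - ((j : ℂ) + 1) * I * w1 := by
      ring
    rw [e1, e2] at h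
    rw [h]
    congr 1
    set a : ℂ := π * I * w1 / (2 * w2) with ha
    have hY : π * (z - (j : ℂ) * I * w1 - I * w1 / 2) / w2
        = π * z / w2 - (2 * (j : ℂ) + 1) * a := by rw [ha]; ring
    have hpow : sq ^ (-(2 * (j : ℤ) + 1)) = Complex.exp ((-(2 * (j : ℂ)) - 1) * a) := by
      rw [hsq, ← Complex.exp_int_mul]; congr 1; push_cast; ring
    have hq2 : q ^ (2 * j) = Complex.exp ((4 * (j : ℂ)) * a) := by
      rw [hq, hsq, ← Complex.exp_nat_mul, ← Complex.exp_nat_mul]; congr 1; push_cast; ring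
    have hq1 : q = Complex.exp (2 * a) := by
      rw [hq, hsq, ← Complex.exp_nat_mul]; norm_num
    rw [Complex.two_cosh, hY, hpow, hq2, hq1]
    simp only [mul_sub, mul_one, mul_neg, neg_mul, neg_neg, sub_eq_add_neg, ← Complex.exp_add]
    ring_nf
    rw [← Complex.exp_add]
    congr 2
    ring
  induction k with
  | zero =>
    simp only [Nat.cast_zero, zero_mul, sub_zero, Finset.range_zero, Finset.prod_empty]
    rw [div_self]
    · norm_num
    · have := hne 0 le_rfl; simpa using this
  | succ k ih =>
    have hk : ∀ j : ℕ, j ≤ k → G (z - (j : ℂ) * I * w1) ≠ 0 := fun j hj =>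
      hne j (hj.trans (Nat.le_succ k))
    have ih' := ih hk
    have hGk : G (z - (k : ℂ) * I * w1) ≠ 0 := hk k le_rfl
    have hGk1 : G (z - ((k + 1 : ℕ) : ℂ) * I * w1) ≠ 0 := hne (k + 1) le_rfl
    have hcast : ((k + 1 : ℕ) : ℂ) = (k : ℂ) + 1 := by push_cast; ring
    rw [hcast] at hGk1 ⊢
    have hkey := key k
    have hc0 : Complex.exp (π * z / w2) * sq ^ (-(2 * (k : ℤ) + 1)) *
        (1 - (-Complex.exp (-(2 * π * z) / w2) * q) * q ^ (2 * k)) ≠ 0 := by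
      intro h0
      rw [h0, zero_mul] at hkey
      exact hGk hkey
    have hdiv : G z / G (z - ((k : ℂ) + 1) * I * w1)
        = (G z / G (z - (k : ℂ) * I * w1)) *
          (Complex.exp (π * z / w2) * sq ^ (-(2 * (k : ℤ) + 1)) *
            (1 - (-Complex.exp (-(2 * π * z) / w2) * q) * q ^ (2 * k))) := by
      rw [hkey, div_mul_eq_mul_div, mul_comm (G z), mul_div_mul_left _ _ hc0]
    rw [hdiv, ih', Finset.prod_range_succ]
    have hexp : Complex.exp ((k : ℂ) * π * z / w2) * Complex.exp (π * z / w2)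
        = Complex.exp (((k : ℂ) + 1) * π * z / w2) := by
      rw [← Complex.exp_add]; ring_nf
    have hzp : sq ^ (-(k ^ 2 : ℤ)) * sq ^ (-(2 * (k : ℤ) + 1))
        = sq ^ (-(((k : ℤ) + 1) ^ 2)) := by
      rw [← zpow_add₀ hsq0]; congr 1; ring
    push_cast
    rw [← hexp, ← hzp]
    ring
end
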